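/- arXiv:2507.05796 — 2 statements merged into one kernel-verified Lean document; each statement's English description precedes it below -/
import Mathlib

section
/- Let R = k[[x, y]] and I = (x^2 y + y^{n-1}) defining a D_n singularity. Then for all m ≤ n − 1, the m-th jet closure of I equals I + m^{m+1}, where m is the maximal ideal of R. -/
open Polynomial

/-- The truncated polynomial ring `A[t]/(t^(m+1))`. -/
abbrev JetTrunc (A : Type) [CommRing A] (m : ℕ) : Type :=
  Polynomial A ⧸ (Ideal.span {(X : Polynomial A) ^ (m + 1)} : Ideal (Polynomial A))

/-- The image of the variable `t` in `A[t]/(t^(m+1))`. -/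
noncomputable def jetT (A : Type) [CommRing A] (m : ℕ) : JetTrunc A m :=
  Ideal.Quotient.mk _ (X : Polynomial A)

/-- A test datum for the `m`-th jet closure of an ideal `I` of a local `k`-algebra `(R, 𝔪)`:
a `k`-algebra `A` together with a `k`-algebra map `φ : R → A[t]/(t^(m+1))` killing `I`
and sending the maximal ideal `𝔪` into `(t)` (i.e. an `A`-point of the scheme of local
`m`-jets of `Spec (R/I)` over the closed point). -/
structure JetTest (k : Type) [CommRing k] {R : Type} [CommRing R] [Algebra k R]
    (𝔪 : Ideal R) (m : ℕ) (I : Ideal R) where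
  A : Type
  [instCommRing : CommRing A]
  [instAlgebra : Algebra k A]
  φ : R →ₐ[k] JetTrunc A m
  ker_I : ∀ f ∈ I, φ f = 0
  max_to_t : ∀ f ∈ 𝔪, φ f ∈ Ideal.span {jetT A m}

attribute [instance] JetTest.instCommRing JetTest.instAlgebra

/-- The `m`-th jet closure `I^{m-jc}` of an ideal `I` in a local `k`-algebra `(R, 𝔪)`:
the intersection of the kernels of all jet test maps (functor-of-points description of the
kernel of `μ_m : R → R_m[t]/(t^(m+1), I_m, 𝔪^e)`). -/
noncomputable def jetClosure (k : Type) [CommRing k] {R : Type} [CommRing R] [Algebra k R]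
    (𝔪 : Ideal R) (m : ℕ) (I : Ideal R) : Ideal R :=
  sInf { J : Ideal R | ∃ T : JetTest k 𝔪 m I, J = RingHom.ker T.φ }

/-- The maximal ideal `(x_1, ..., x_n)` of the formal power series ring `k[[x_1, ..., x_n]]`. -/
noncomputable def mIdeal (k : Type) [Field k] (n : ℕ) : Ideal (MvPowerSeries (Fin n) k) :=
  RingHom.ker (MvPowerSeries.constantCoeff (σ := Fin n) (R := k))

/-- The variable `x` in `k[[x, y]]`. -/
noncomputable def xx (k : Type) [Field k] : MvPowerSeries (Fin 2) k := MvPowerSeries.X 0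

/-- The variable `y` in `k[[x, y]]`. -/
noncomputable def yy (k : Type) [Field k] : MvPowerSeries (Fin 2) k := MvPowerSeries.X 1

/-!
Every jet test kills `I` and, sending `𝔪` into `(t)`, also `𝔪 ^ (m + 1)`. Conversely, any point
of `A[t]/(t^(m+1))` with coordinates in `(t)` gives a jet test by evaluating power series there.
Evaluating at `(x̄ t, ȳ t)` over `A = R/(x²y, y^(n-1))`, which kills `x²y` and `y^(n-1)`
separately, shows that the truncation at degree `m` of any `f` in the jet closure lies in
`(x²y, y^(n-1))`, so `f ∈ I + 𝔪^(m+1) + k y^(n-1)`. For `m < n - 1` the last summand lies in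
`𝔪^(m+1)`. For `m = n - 1` a jet of `x²y + y^(n-1) = 0` on which `y^(n-1)` does not vanish
rules it out: `x ↦ i t^((n-2)/2), y ↦ t` over `k[i]/(i² + 1)` for even `n`, and
`x ↦ u^((n-1)/2) t^((n-3)/2), y ↦ u t - t²` over `k[u]/(u^n)` for odd `n`.
-/

theorem jetT_pow_succ (A : Type) [CommRing A] (m : ℕ) : jetT A m ^ (m + 1) = 0 := by
  rw [jetT, ← map_pow, Ideal.Quotient.eq_zero_iff_mem]
  exact Ideal.mem_span_singleton_self _

theorem span_jetT_pow_succ_eq_bot (A : Type) [CommRing A] (m : ℕ) :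
    Ideal.span {jetT A m} ^ (m + 1) = ⊥ := by
  rw [Ideal.span_singleton_pow, jetT_pow_succ, Ideal.span_singleton_eq_bot]

theorem jetTrunc_mk_eq_zero_iff {A : Type} [CommRing A] {m : ℕ} (p : A[X]) :
    (Ideal.Quotient.mk _ p : JetTrunc A m) = 0 ↔ X ^ (m + 1) ∣ p := by
  rw [Ideal.Quotient.eq_zero_iff_mem, Ideal.mem_span_singleton]

theorem algebraMap_mul_jetT_pow_eq_zero_iff {A : Type} [CommRing A] {m d : ℕ} {a : A}
    (hd : d ≤ m) : algebraMap A (JetTrunc A m) a * jetT A m ^ d = 0 ↔ a = 0 := by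
  have : algebraMap A (JetTrunc A m) a * jetT A m ^ d = Ideal.Quotient.mk _ (C a * X ^ d) := rfl
  rw [this, jetTrunc_mk_eq_zero_iff, X_pow_dvd_iff]
  exact ⟨fun h => by simpa using h d (by omega), fun h => by simp [h]⟩

theorem algebraMap_mul_jetT_mem {A : Type} [CommRing A] {m : ℕ} (a : A) :
    algebraMap A (JetTrunc A m) a * jetT A m ∈ Ideal.span {jetT A m} :=
  Ideal.mul_mem_left _ _ (Ideal.mem_span_singleton_self _)

section JetClosure

variable {k R : Type} [CommRing k] [CommRing R] [Algebra k R] {𝔪 I : Ideal R} {m : ℕ}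

namespace JetTest

theorem map_eq_zero_of_mem_pow (T : JetTest k 𝔪 m I) {f : R} (hf : f ∈ 𝔪 ^ (m + 1)) :
    T.φ f = 0 := by
  have h𝔪 : 𝔪.map T.φ ≤ Ideal.span {jetT T.A m} :=
    Ideal.map_le_iff_le_comap.mpr fun g hg => T.max_to_t g hg
  have hf' := Ideal.mem_map_of_mem T.φ hf
  rw [Ideal.map_pow] at hf'
  have := Ideal.pow_right_mono h𝔪 (m + 1) hf'
  rwa [span_jetT_pow_succ_eq_bot, Ideal.mem_bot] at this

theorem map_eq_zero_of_mem_jetClosure (T : JetTest k 𝔪 m I) {f : R}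
    (hf : f ∈ jetClosure k 𝔪 m I) : T.φ f = 0 :=
  Submodule.mem_sInf.mp hf _ ⟨T, rfl⟩

end JetTest

theorem sup_pow_le_jetClosure : I ⊔ 𝔪 ^ (m + 1) ≤ jetClosure k 𝔪 m I :=
  le_sInf fun _ ⟨T, hT⟩ => hT ▸ sup_le (fun f hf => T.ker_I f hf)
    (fun _ hf => T.map_eq_zero_of_mem_pow hf)

end JetClosure

namespace MvPolynomial

variable {σ k B : Type*} [CommRing k] [CommRing B] [Algebra k B]

theorem aeval_mem_pow_of_mem_pow_idealOfVars {J : Ideal B} {b : σ → B} (hb : ∀ i, b i ∈ J)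
    {p : ℕ} {P : MvPolynomial σ k} (hP : P ∈ idealOfVars σ k ^ p) : aeval b P ∈ J ^ p := by
  have hmap : (idealOfVars σ k).map (aeval b) ≤ J := by
    rw [Ideal.map_span, Ideal.span_le]
    rintro _ ⟨_, ⟨i, rfl⟩, rfl⟩
    simpa using hb i
  have hPb := Ideal.mem_map_of_mem (aeval b) hP
  rw [Ideal.map_pow] at hPb
  exact Ideal.pow_right_mono hmap p hPb

theorem aeval_C_mul_X_monomial (a : σ → B) (s : σ →₀ ℕ) (r : k) :
    aeval (fun i => Polynomial.C (a i) * Polynomial.X) (monomial s r) =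
      Polynomial.C (aeval a (monomial s r)) * Polynomial.X ^ s.degree := by
  simp only [aeval_monomial, Polynomial.algebraMap_apply, Finsupp.prod, mul_pow,
    Finset.prod_mul_distrib, Finset.prod_pow_eq_pow_sum, map_mul, map_prod, map_pow, mul_assoc]
  rfl

theorem natDegree_aeval_C_mul_X_le (a : σ → B) (P : MvPolynomial σ k) :
    (aeval (fun i => Polynomial.C (a i) * Polynomial.X) P).natDegree ≤ P.totalDegree := by
  conv_lhs => rw [P.as_sum, map_sum]
  refine natDegree_sum_le_of_forall_le _ _ fun s hs => ?_
  rw [aeval_C_mul_X_monomial]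
  exact natDegree_C_mul_X_pow_le _ _ |>.trans (le_totalDegree hs)

theorem eval_one_aeval_C_mul_X (a : σ → B) (P : MvPolynomial σ k) :
    (aeval (fun i => Polynomial.C (a i) * Polynomial.X) P).eval 1 = aeval a P := by
  have h := congrArg (· P) (comp_aeval (fun i => Polynomial.C (a i) * Polynomial.X)
    ((Polynomial.aeval (1 : B)).restrictScalars k))
  simpa using h

theorem aeval_eq_zero_of_X_pow_dvd_aeval_C_mul_X (a : σ → B) {m : ℕ} {P : MvPolynomial σ k}
    (hP : P.totalDegree ≤ m)
    (h : Polynomial.X ^ (m + 1) ∣ aeval (fun i => Polynomial.C (a i) * Polynomial.X) P) :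
    aeval a P = 0 := by
  have hzero : aeval (fun i => Polynomial.C (a i) * Polynomial.X) P = 0 := by
    ext d
    rw [Polynomial.coeff_zero]
    rcases le_or_gt d m with hd | hd
    · exact X_pow_dvd_iff.mp h d (by omega)
    · exact Polynomial.coeff_eq_zero_of_natDegree_lt
        ((natDegree_aeval_C_mul_X_le a P).trans hP |>.trans_lt hd)
  rw [← eval_one_aeval_C_mul_X, hzero, Polynomial.eval_zero]

end MvPolynomial

namespace MvPowerSeries

theorem mem_ker_constantCoeff_pow_of_coeff_eq_zero {σ R : Type*} [Fintype σ] [CommSemiring R]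
    {p : ℕ} {f : MvPowerSeries σ R}
    (hf : ∀ s : σ →₀ ℕ, s.degree < p → coeff s f = 0) :
    f ∈ RingHom.ker (constantCoeff (σ := σ) (R := R)) ^ p := by
  classical
  induction p generalizing f with
  | zero => simp
  | succ p ih =>
    rcases isEmpty_or_nonempty σ with hσ | hσ
    · have : f = 0 := by ext s; simpa [Subsingleton.elim s 0] using hf s
      simp [this]
    -- attach every nonzero exponent to one variable it contains
    have hpivot : ∀ s : σ →₀ ℕ, s ≠ 0 → ∃ i, s i ≠ 0 := fun s hs => by
      simpa [DFunLike.ne_iff] using hs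
    choose! pivot hpivot using hpivot
    let g : σ → MvPowerSeries σ R := fun i s =>
      if pivot (s + Finsupp.single i 1) = i then coeff (s + Finsupp.single i 1) f else 0
    have coeff_g : ∀ i s, coeff s (g i) = if pivot (s + Finsupp.single i 1) = i
        then coeff (s + Finsupp.single i 1) f else 0 := fun _ _ => rfl
    have hfg : f = ∑ i, X i * g i := by
      ext s
      simp only [map_sum, X_def, coeff_monomial_mul, one_mul]
      by_cases hs : s = 0
      · subst hs
        simp [hf 0 (by simp)]
      rw [Finset.sum_eq_single (pivot s)]
      · have hle : Finsupp.single (pivot s) 1 ≤ s := by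
          simpa [Nat.one_le_iff_ne_zero] using hpivot s hs
        simp [hle, coeff_g, tsub_add_cancel_of_le hle]
      · intro i _ hi
        split_ifs with hle
        · simp [coeff_g, tsub_add_cancel_of_le hle, Ne.symm hi]
        · rfl
      · simp
    rw [hfg, pow_succ']
    refine Ideal.sum_mem _ fun i _ => Ideal.mul_mem_mul (by simp) (ih fun s hs => ?_)
    rw [coeff_g]
    split_ifs
    · exact hf _ (by rw [map_add, Finsupp.degree_single]; omega)
    · rfl

theorem sub_truncTotal_mem_ker_constantCoeff_pow {σ R : Type*} [Fintype σ] [CommRing R]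
    (p : ℕ) (f : MvPowerSeries σ R) :
    f - (truncTotal p f : MvPowerSeries σ R) ∈
      RingHom.ker (constantCoeff (σ := σ) (R := R)) ^ p :=
  mem_ker_constantCoeff_pow_of_coeff_eq_zero fun s hs => by
    rw [map_sub, MvPolynomial.coeff_coe, coeff_truncTotal _ hs, sub_self]

variable {σ k B : Type*} [Fintype σ] [CommRing k] [CommRing B] [Algebra k B]
  {m : ℕ} {J : Ideal B} (hJ : J ^ (m + 1) = ⊥) {b : σ → B} (hb : ∀ i, b i ∈ J)

/-- Evaluation at `b`: as `J ^ (m + 1) = 0`, only the terms of total degree `≤ m` contribute. -/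
noncomputable def jetEval : MvPowerSeries σ k →ₐ[k] B :=
  (Ideal.Quotient.liftₐ (MvPolynomial.idealOfVars σ k ^ (m + 1)) (MvPolynomial.aeval b)
      fun P hP => by
        simpa [hJ] using MvPolynomial.aeval_mem_pow_of_mem_pow_idealOfVars hb hP).comp
    ((truncTotalAlgHom σ k (m + 1)).restrictScalars k)

theorem jetEval_apply (f : MvPowerSeries σ k) :
    jetEval hJ hb f = MvPolynomial.aeval b (truncTotal (m + 1) f) :=
  rfl

theorem jetEval_coe (P : MvPolynomial σ k) :
    jetEval hJ hb (P : MvPowerSeries σ k) = MvPolynomial.aeval b P := by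
  have h := (truncTotalAlgHom σ k (m + 1)).commutes P
  rw [MvPowerSeries.algebraMap_apply', Algebra.algebraMap_self, map_id, RingHom.id_apply] at h
  simp only [jetEval, AlgHom.comp_apply, AlgHom.restrictScalars_apply, h,
    Ideal.Quotient.algebraMap_eq, Ideal.Quotient.liftₐ_apply]
  rfl

theorem jetEval_X (i : σ) : jetEval hJ hb (X i : MvPowerSeries σ k) = b i := by
  simpa using jetEval_coe hJ hb (MvPolynomial.X i)

theorem jetEval_mem_of_mem_ker {f : MvPowerSeries σ k}
    (hf : f ∈ RingHom.ker (constantCoeff (σ := σ) (R := k))) : jetEval hJ hb f ∈ J := by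
  rw [jetEval_apply, ← pow_one J]
  refine MvPolynomial.aeval_mem_pow_of_mem_pow_idealOfVars hb
    ((MvPolynomial.mem_pow_idealOfVars_iff' 1 _).mpr fun s hs => ?_)
  rw [Nat.lt_one_iff, Finsupp.degree_eq_zero_iff] at hs
  subst hs
  simpa [coeff_truncTotal] using hf

theorem aeval_truncTotal_eq_zero_of_jetEval_eq_zero {A : Type} [CommRing A] [Algebra k A]
    (a : σ → A) {f : MvPowerSeries σ k}
    (hf : jetEval (span_jetT_pow_succ_eq_bot A m) (fun i => algebraMap_mul_jetT_mem (a i)) f = 0) :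
    MvPolynomial.aeval a (truncTotal (m + 1) f) = 0 := by
  have hmk : (Ideal.Quotient.mkₐ k _).comp
      (MvPolynomial.aeval fun i => Polynomial.C (a i) * Polynomial.X) =
      MvPolynomial.aeval fun i => algebraMap A (JetTrunc A m) (a i) * jetT A m :=
    MvPolynomial.comp_aeval _ _
  rw [jetEval_apply, ← hmk, AlgHom.comp_apply, Ideal.Quotient.mkₐ_eq_mk,
    jetTrunc_mk_eq_zero_iff] at hf
  exact MvPolynomial.aeval_eq_zero_of_X_pow_dvd_aeval_C_mul_X a
    (Nat.lt_succ_iff.mp (totalDegree_truncTotal_lt _ (Nat.succ_ne_zero m))) hf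

end MvPowerSeries

open MvPowerSeries in
noncomputable def JetTest.ofEval {k : Type} [Field k] {n m : ℕ} {A : Type} [CommRing A]
    [Algebra k A] (b : Fin n → JetTrunc A m) (hb : ∀ i, b i ∈ Ideal.span {jetT A m})
    {g : MvPowerSeries (Fin n) k} (hg : jetEval (span_jetT_pow_succ_eq_bot A m) hb g = 0) :
    JetTest k (mIdeal k n) m (Ideal.span {g}) where
  A := A
  φ := jetEval (span_jetT_pow_succ_eq_bot A m) hb
  ker_I f hf := by
    obtain ⟨c, rfl⟩ := Ideal.mem_span_singleton'.mp hf
    rw [map_mul, hg, mul_zero]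
  max_to_t _ hf := jetEval_mem_of_mem_ker _ hb hf

namespace Dn

open MvPowerSeries

variable {k : Type} [Field k] {n m : ℕ}

theorem yy_pow_mem_mIdeal_pow (p : ℕ) : yy k ^ p ∈ mIdeal k 2 ^ p :=
  Ideal.pow_mem_pow (by simp [mIdeal, yy]) p

theorem jetEval_xx_sq_mul_yy_add_yy_pow {B : Type} [CommRing B] [Algebra k B] {J : Ideal B}
    (hJ : J ^ (m + 1) = ⊥) {b : Fin 2 → B} (hb : ∀ i, b i ∈ J) :
    jetEval hJ hb (xx k ^ 2 * yy k + yy k ^ (n - 1)) = b 0 ^ 2 * b 1 + b 1 ^ (n - 1) := by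
  simp only [map_add, map_mul, map_pow, xx, yy, jetEval_X]

theorem ofEval_smul_yy_pow {A : Type} [CommRing A] [Algebra k A] (b : Fin 2 → JetTrunc A m)
    (hb : ∀ i, b i ∈ Ideal.span {jetT A m}) {g : MvPowerSeries (Fin 2) k}
    (hg : jetEval (span_jetT_pow_succ_eq_bot A m) hb g = 0) (c : k) (p : ℕ) :
    (JetTest.ofEval b hb hg).φ (c • yy k ^ p) = algebraMap k (JetTrunc A m) c * b 1 ^ p := by
  change jetEval (span_jetT_pow_succ_eq_bot A m) hb (c • yy k ^ p) = _
  rw [map_smul, map_pow, yy, jetEval_X]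
  exact Algebra.smul_def (A := JetTrunc A m) c _

theorem coe_truncTotal_mem_of_mem_jetClosure {f : MvPowerSeries (Fin 2) k}
    (hf : f ∈ jetClosure k (mIdeal k 2) m (Ideal.span {xx k ^ 2 * yy k + yy k ^ (n - 1)})) :
    (truncTotal (m + 1) f : MvPowerSeries (Fin 2) k) ∈
      Ideal.span {xx k ^ 2 * yy k, yy k ^ (n - 1)} := by
  set J := Ideal.span {xx k ^ 2 * yy k, yy k ^ (n - 1)}
  set ι := algebraMap (MvPowerSeries (Fin 2) k ⧸ J) (JetTrunc (MvPowerSeries (Fin 2) k ⧸ J) m)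
  set t := jetT (MvPowerSeries (Fin 2) k ⧸ J) m
  let a : Fin 2 → MvPowerSeries (Fin 2) k ⧸ J := fun i => Ideal.Quotient.mk J (X i)
  have hx : a 0 ^ 2 * a 1 = 0 :=
    Ideal.Quotient.eq_zero_iff_mem.mpr (Ideal.subset_span (by simp [xx, yy]))
  have hy : a 1 ^ (n - 1) = 0 :=
    Ideal.Quotient.eq_zero_iff_mem.mpr (Ideal.subset_span (by simp [xx, yy]))
  have hg : jetEval (span_jetT_pow_succ_eq_bot _ m) (fun i => algebraMap_mul_jetT_mem (a i))
      (xx k ^ 2 * yy k + yy k ^ (n - 1)) = 0 := by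
    rw [jetEval_xx_sq_mul_yy_add_yy_pow]
    calc (ι (a 0) * t) ^ 2 * (ι (a 1) * t) + (ι (a 1) * t) ^ (n - 1)
        = ι (a 0 ^ 2 * a 1) * t ^ 3 + ι (a 1 ^ (n - 1)) * t ^ (n - 1) := by
          simp only [map_mul, map_pow]; ring
      _ = 0 := by rw [hx, hy, map_zero, zero_mul, zero_mul, add_zero]
  have hzero := aeval_truncTotal_eq_zero_of_jetEval_eq_zero a
    ((JetTest.ofEval _ _ hg).map_eq_zero_of_mem_jetClosure hf)
  have haeval : MvPolynomial.aeval a =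
      (Ideal.Quotient.mkₐ k J).comp (MvPolynomial.coeToMvPowerSeries.algHom k) :=
    MvPolynomial.algHom_ext fun i => by simp [a]
  rwa [haeval, AlgHom.comp_apply, MvPolynomial.coeToMvPowerSeries.algHom_apply,
    Algebra.algebraMap_self, MvPowerSeries.map_id, RingHom.id_apply, Ideal.Quotient.mkₐ_eq_mk,
    Ideal.Quotient.eq_zero_iff_mem] at hzero

theorem exists_sub_smul_yy_pow_mem (hm : m ≤ n - 1) {f : MvPowerSeries (Fin 2) k}
    (hf : f ∈ jetClosure k (mIdeal k 2) m (Ideal.span {xx k ^ 2 * yy k + yy k ^ (n - 1)})) :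
    ∃ c : k, f - c • yy k ^ (n - 1) ∈
      Ideal.span {xx k ^ 2 * yy k + yy k ^ (n - 1)} ⊔ mIdeal k 2 ^ (m + 1) := by
  obtain ⟨P, Q, hPQ⟩ := Ideal.mem_span_pair.mp (coe_truncTotal_mem_of_mem_jetClosure hf)
  set c := constantCoeff (Q - P)
  have hdecomp : f - c • yy k ^ (n - 1) = P * (xx k ^ 2 * yy k + yy k ^ (n - 1)) +
      ((Q - P - MvPowerSeries.C c) * yy k ^ (n - 1) +
        (f - (truncTotal (m + 1) f : MvPowerSeries (Fin 2) k))) := by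
    rw [MvPowerSeries.smul_eq_C_mul, ← hPQ]; ring
  have hQP : Q - P - MvPowerSeries.C c ∈ mIdeal k 2 := by simp [mIdeal, c]
  have hQPy := Ideal.mul_mem_mul hQP (yy_pow_mem_mIdeal_pow (n - 1))
  rw [← pow_succ'] at hQPy
  refine ⟨c, hdecomp ▸ add_mem ?_ (Ideal.mem_sup_right (add_mem ?_ ?_))⟩
  · exact Ideal.mem_sup_left (Ideal.mul_mem_left _ _ (Ideal.mem_span_singleton_self _))
  · exact Ideal.pow_le_pow_right (by omega) hQPy
  · exact sub_truncTotal_mem_ker_constantCoeff_pow (m + 1) f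

theorem exists_jetTest_of_even (hn : 4 ≤ n) (he : Even n) :
    ∃ T : JetTest k (mIdeal k 2) (n - 1) (Ideal.span {xx k ^ 2 * yy k + yy k ^ (n - 1)}),
      ∀ c : k, T.φ (c • yy k ^ (n - 1)) = 0 → c = 0 := by
  let A := AdjoinRoot (Polynomial.X ^ 2 + 1 : k[X])
  have : Nontrivial A :=
    AdjoinRoot.nontrivial _ (by rw [← C_1, degree_X_pow_add_C two_pos]; decide)
  set z := AdjoinRoot.root (Polynomial.X ^ 2 + 1 : k[X])
  have hz : z ^ 2 + 1 = 0 := by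
    have h := AdjoinRoot.aeval_eq (f := (Polynomial.X ^ 2 + 1 : k[X])) (Polynomial.X ^ 2 + 1)
    rwa [AdjoinRoot.mk_self, map_add, map_pow, aeval_X, map_one] at h
  set ι := algebraMap A (JetTrunc A (n - 1))
  set t := jetT A (n - 1)
  obtain ⟨j, hj1, hj⟩ : ∃ j, 1 ≤ j ∧ 2 * j + 1 = n - 1 := by
    obtain ⟨r, rfl⟩ := he; exact ⟨r - 1, by omega, by omega⟩
  let b : Fin 2 → JetTrunc A (n - 1) := ![ι z * t ^ j, t]
  have hb : ∀ i, b i ∈ Ideal.span {t} := by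
    intro i
    fin_cases i
    · exact Ideal.mul_mem_left _ _
        (Ideal.pow_mem_of_mem _ (Ideal.mem_span_singleton_self t) j hj1)
    · exact Ideal.mem_span_singleton_self t
  have hg : jetEval (span_jetT_pow_succ_eq_bot A (n - 1)) hb
      (xx k ^ 2 * yy k + yy k ^ (n - 1)) = 0 := by
    rw [jetEval_xx_sq_mul_yy_add_yy_pow]
    calc (ι z * t ^ j) ^ 2 * t + t ^ (n - 1) = ι (z ^ 2 + 1) * t ^ (n - 1) := by
          rw [congrArg (t ^ ·) hj.symm, map_add, map_pow, map_one]; ring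
      _ = 0 := by rw [hz, map_zero, zero_mul]
  refine ⟨JetTest.ofEval b hb hg, fun c hc => ?_⟩
  replace hc : algebraMap k _ c * t ^ (n - 1) = 0 := by rwa [ofEval_smul_yy_pow] at hc
  rwa [IsScalarTower.algebraMap_apply k A, algebraMap_mul_jetT_pow_eq_zero_iff le_rfl,
    map_eq_zero_iff _ (algebraMap k A).injective] at hc

theorem exists_jetTest_of_odd (hn : 4 ≤ n) (ho : Odd n) :
    ∃ T : JetTest k (mIdeal k 2) (n - 1) (Ideal.span {xx k ^ 2 * yy k + yy k ^ (n - 1)}),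
      ∀ c : k, T.φ (c • yy k ^ (n - 1)) = 0 → c = 0 := by
  let A := JetTrunc k (n - 1)
  set u := jetT k (n - 1)
  set ι := algebraMap A (JetTrunc A (n - 1))
  set t := jetT A (n - 1)
  obtain ⟨j, hj1, hj⟩ : ∃ j, 1 ≤ j ∧ 2 * j + 2 = n - 1 := by
    obtain ⟨r, rfl⟩ := ho; exact ⟨r - 1, by omega, by omega⟩
  have hpow : ∀ x : JetTrunc A (n - 1), x ^ (n - 1) = x ^ (2 * j + 2) :=
    fun x => congrArg (x ^ ·) hj.symm
  have hu : ι u ^ (2 * j + 3) = 0 := by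
    rw [← map_pow, show 2 * j + 3 = n - 1 + 1 by omega, jetT_pow_succ, map_zero]
  have ht : t ^ (2 * j + 3) = 0 := by
    rw [show 2 * j + 3 = n - 1 + 1 by omega]; exact jetT_pow_succ A (n - 1)
  let b : Fin 2 → JetTrunc A (n - 1) := ![ι u ^ (j + 1) * t ^ j, t * (ι u - t)]
  have hb : ∀ i, b i ∈ Ideal.span {t} := by
    intro i
    fin_cases i
    · exact Ideal.mul_mem_left _ _
        (Ideal.pow_mem_of_mem _ (Ideal.mem_span_singleton_self t) j hj1)
    · exact Ideal.mul_mem_right _ _ (Ideal.mem_span_singleton_self t)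
  -- `t ^ (n - 1)` kills every correction term of `(ι u - t) ^ (n - 1)`
  have hb1 : b 1 ^ (n - 1) = ι u ^ (n - 1) * t ^ (n - 1) := by
    obtain ⟨w, hw⟩ := sub_dvd_pow_sub_pow (ι u - t) (ι u) (2 * j + 2)
    rw [hpow, hpow, hpow]
    calc (t * (ι u - t)) ^ (2 * j + 2)
        = t ^ (2 * j + 2) * ((ι u - t) ^ (2 * j + 2) - ι u ^ (2 * j + 2)) +
            ι u ^ (2 * j + 2) * t ^ (2 * j + 2) := by rw [mul_pow]; ring
      _ = -(t ^ (2 * j + 3) * w) + ι u ^ (2 * j + 2) * t ^ (2 * j + 2) := by rw [hw]; ring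
      _ = ι u ^ (2 * j + 2) * t ^ (2 * j + 2) := by rw [ht, zero_mul, neg_zero, zero_add]
  have hg : jetEval (span_jetT_pow_succ_eq_bot A (n - 1)) hb
      (xx k ^ 2 * yy k + yy k ^ (n - 1)) = 0 := by
    rw [jetEval_xx_sq_mul_yy_add_yy_pow, hb1]
    calc (ι u ^ (j + 1) * t ^ j) ^ 2 * (t * (ι u - t)) + ι u ^ (n - 1) * t ^ (n - 1)
        = ι u ^ (2 * j + 3) * t ^ (2 * j + 1) := by rw [hpow, hpow]; ring
      _ = 0 := by rw [hu, zero_mul]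
  refine ⟨JetTest.ofEval b hb hg, fun c hc => ?_⟩
  rw [ofEval_smul_yy_pow, hb1, IsScalarTower.algebraMap_apply k A, ← mul_assoc, ← map_pow,
    ← map_mul] at hc
  exact (algebraMap_mul_jetT_pow_eq_zero_iff (A := k) le_rfl).mp
    ((algebraMap_mul_jetT_pow_eq_zero_iff (A := A) le_rfl).mp hc)

theorem eq_zero_of_smul_yy_pow_mem_jetClosure (hn : 4 ≤ n) {c : k}
    (h : c • yy k ^ (n - 1) ∈
      jetClosure k (mIdeal k 2) (n - 1) (Ideal.span {xx k ^ 2 * yy k + yy k ^ (n - 1)})) :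
    c = 0 := by
  obtain ⟨T, hT⟩ :=
    n.even_or_odd.elim (exists_jetTest_of_even (k := k) hn) (exists_jetTest_of_odd hn)
  exact hT c (T.map_eq_zero_of_mem_jetClosure h)

end Dn

theorem jetClosure_Dn_general (k : Type) [Field k]
    (n : ℕ) (hn : 4 ≤ n) (m : ℕ) (hm : m ≤ n - 1) :
    jetClosure k (mIdeal k 2) m (Ideal.span {xx k ^ 2 * yy k + yy k ^ (n - 1)}) =
      Ideal.span {xx k ^ 2 * yy k + yy k ^ (n - 1)} ⊔ (mIdeal k 2) ^ (m + 1) := by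
  refine le_antisymm (fun f hf => ?_) sup_pow_le_jetClosure
  obtain ⟨c, hc⟩ := Dn.exists_sub_smul_yy_pow_mem hm hf
  suffices c • yy k ^ (n - 1) ∈
      Ideal.span {xx k ^ 2 * yy k + yy k ^ (n - 1)} ⊔ mIdeal k 2 ^ (m + 1) by
    simpa using add_mem hc this
  rcases hm.lt_or_eq with hlt | rfl
  · exact Ideal.mem_sup_right (Submodule.smul_of_tower_mem _ c
      (Ideal.pow_le_pow_right (by omega) (Dn.yy_pow_mem_mIdeal_pow (n - 1))))
  · have hmem := sub_mem hf (sup_pow_le_jetClosure hc)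
    rw [sub_sub_cancel] at hmem
    rw [Dn.eq_zero_of_smul_yy_pow_mem_jetClosure hn hmem, zero_smul]
    exact zero_mem _

/-- for the `D_n` singularity `I = (x^2 y + y^(n-1))` in `k[[x, y]]`,
the `m`-th jet closure of `I` is `I + 𝔪^(m+1)` for all `m ≤ n - 1`. -/
theorem jetClosure_Dn (k : Type) [Field k] [IsAlgClosed k] [CharZero k]
    (n : ℕ) (hn : 4 ≤ n) (m : ℕ) (hm : m ≤ n - 1) :
    jetClosure k (mIdeal k 2) m (Ideal.span {xx k ^ 2 * yy k + yy k ^ (n - 1)}) =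
      Ideal.span {xx k ^ 2 * yy k + yy k ^ (n - 1)} ⊔ (mIdeal k 2) ^ (m + 1) :=
  jetClosure_Dn_general k n hn m hm
end

section
/- For any ideal I ⊆ R = k[[x_1, ..., x_n]] and any m ∈ ℕ, one has m · I^{m-jc} ⊆ I^{(m+1)-jc}, where m is the maximal ideal of R. -/
open Polynomial

noncomputable def truncMap (k : Type) [CommRing k] (A : Type) [CommRing A] [Algebra k A]
    (m : ℕ) : JetTrunc A (m + 1) →ₐ[k] JetTrunc A m :=
  Ideal.Quotient.factorₐ k <|
    Ideal.span_singleton_le_span_singleton.mpr (pow_dvd_pow X (Nat.le_succ _))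

/-- `x` lies in `(t^(m+1))`. -/
theorem jetT_mul_eq_zero_of_truncMap_eq_zero (k : Type) [CommRing k] {A : Type} [CommRing A]
    [Algebra k A] {m : ℕ} {x : JetTrunc A (m + 1)} (hx : truncMap k A m x = 0) :
    jetT A (m + 1) * x = 0 := by
  obtain ⟨p, rfl⟩ := Ideal.Quotient.mk_surjective x
  obtain ⟨q, rfl⟩ := Ideal.mem_span_singleton.mp (Ideal.Quotient.eq_zero_iff_mem.mp hx)
  rw [jetT, ← map_mul, Ideal.Quotient.eq_zero_iff_mem, Ideal.mem_span_singleton]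
  exact ⟨q, by ring⟩

noncomputable def JetTest.trunc {k : Type} [CommRing k] {R : Type} [CommRing R] [Algebra k R]
    {𝔪 : Ideal R} {m : ℕ} {I : Ideal R} (T : JetTest k 𝔪 (m + 1) I) : JetTest k 𝔪 m I where
  A := T.A
  φ := (truncMap k T.A m).comp T.φ
  ker_I f hf := by rw [AlgHom.comp_apply, T.ker_I f hf, map_zero]
  max_to_t f hf := by
    obtain ⟨c, hc⟩ := Ideal.mem_span_singleton'.mp (T.max_to_t f hf)
    rw [AlgHom.comp_apply, ← hc, map_mul]
    exact Ideal.mul_mem_left _ _ (Ideal.mem_span_singleton_self _)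

theorem JetTest.truncMap_φ_eq_zero {k : Type} [CommRing k] {R : Type} [CommRing R]
    [Algebra k R] {𝔪 : Ideal R} {m : ℕ} {I : Ideal R} (T : JetTest k 𝔪 (m + 1) I) {f : R}
    (hf : f ∈ jetClosure k 𝔪 m I) : truncMap k T.A m (T.φ f) = 0 :=
  Ideal.mem_sInf.mp hf ⟨T.trunc, rfl⟩

/-- `𝔪` is sent into `(t)`, and `t` kills every `(m+1)`-jet of an element of `I^{m-jc}`. -/
theorem mul_jetClosure_le_jetClosure_succ (k : Type) [CommRing k] {R : Type} [CommRing R]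
    [Algebra k R] (𝔪 : Ideal R) (m : ℕ) (I : Ideal R) :
    𝔪 * jetClosure k 𝔪 m I ≤ jetClosure k 𝔪 (m + 1) I := by
  refine Ideal.mul_le.mpr fun g hg f hf => Ideal.mem_sInf.mpr ?_
  rintro _ ⟨T, rfl⟩
  obtain ⟨c, hc⟩ := Ideal.mem_span_singleton'.mp (T.max_to_t g hg)
  rw [RingHom.mem_ker, map_mul, ← hc, mul_assoc,
    jetT_mul_eq_zero_of_truncMap_eq_zero k (T.truncMap_φ_eq_zero hf), mul_zero]

theorem maximalIdeal_mul_jetClosure_le_general (k : Type) [Field k]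
    (n : ℕ) (I : Ideal (MvPowerSeries (Fin n) k)) (m : ℕ) :
    mIdeal k n * jetClosure k (mIdeal k n) m I ≤ jetClosure k (mIdeal k n) (m + 1) I :=
  mul_jetClosure_le_jetClosure_succ k (mIdeal k n) m I

/-- for any ideal `I ⊆ k[[x_1, ..., x_n]]` and any `m`,
`𝔪 · I^{m-jc} ⊆ I^{(m+1)-jc}`. -/
theorem maximalIdeal_mul_jetClosure_le (k : Type) [Field k] [IsAlgClosed k] [CharZero k]
    (n : ℕ) (I : Ideal (MvPowerSeries (Fin n) k)) (m : ℕ) :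
    mIdeal k n * jetClosure k (mIdeal k n) m I ≤ jetClosure k (mIdeal k n) (m + 1) I :=
  maximalIdeal_mul_jetClosure_le_general k n I m
end
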